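/- Let α be normal in F_{q^n}, β = g ∘ α, and x^n − 1 = f_1^τ ⋯ f_r^τ with f_i distinct irreducibles. Then β is (α, b)-sociable if and only if gcd(x^n − 1, g(x) − c·x^j) = 1 for all j ∈ {0, ..., n−1} and all c ∈ {0, ..., b−1}. -/

import Mathlib

open Polynomial

variable {Fq Fqn : Type*}

/-- Frobenius action of a polynomial on a field element: `f ∘ α = Σ aᵢ α^(q^i)`. -/
noncomputable def circ [Field Fq] [Field Fqn] [Algebra Fq Fqn] (q : ℕ) (f : Fq[X]) (α : Fqn) : Fqn :=
  f.sum fun i a => algebraMap Fq Fqn a * α ^ q ^ i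

/-- `α` is a normal element: its conjugates `α, α^q, …, α^(q^(n-1))` form an `Fq`-basis. -/
def IsNormal (Fq : Type*) {Fqn : Type*} [Field Fq] [Field Fqn] [Algebra Fq Fqn]
    (q n : ℕ) (α : Fqn) : Prop :=
  LinearIndependent Fq (fun i : Fin n => α ^ q ^ (i : ℕ)) ∧
    Submodule.span Fq (Set.range fun i : Fin n => α ^ q ^ (i : ℕ)) = ⊤

/-- `A` is the annihilator of `α`: the monic polynomial of least degree with `A ∘ α = 0`. -/
def IsAnnihilator [Field Fq] [Field Fqn] [Algebra Fq Fqn] (q : ℕ) (α : Fqn) (A : Fq[X]) : Prop :=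
  A.Monic ∧ circ q A α = 0 ∧ ∀ B : Fq[X], B.Monic → circ q B α = 0 → A.degree ≤ B.degree

/-! The `q`-Frobenius `φ` is an `𝔽_q`-linear map with `φ ^ n = 1`, so `h ∘ α = h(φ) α` makes
`𝔽_{q^n}` an `𝔽_q[X]`-module killed by `X ^ n - 1`, and a normal element `α` is a cyclic vector
for it. Then `h ∘ α` is normal iff `h` is a unit modulo `X ^ n - 1`: a common factor `d` gives
`w = (X ^ n - 1) / d` of degree `< n` with `w ∘ (h ∘ α) = 0`, while a Bézout relation `v h ≡ 1`
recovers `α = v ∘ (h ∘ α)`. Finally `(g ∘ α) ^ (q ^ i) - c α = (X ^ i g - c) ∘ α`, and multiplying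
by the unit `X ^ (n - i)` turns this into `g - c X ^ (n - i)`. -/

open Module Submodule FiniteField

theorem isCoprime_iff_of_dvd_sub {R : Type*} [CommRing R] {F a b : R} (h : F ∣ a - b) :
    IsCoprime F a ↔ IsCoprime F b := by
  obtain ⟨k, hk⟩ := h
  rw [show a = b + F * k by linear_combination hk, IsCoprime.add_mul_left_right_iff]

namespace Polynomial

variable {K : Type*} [Field K]

theorem exists_dvd_mul_of_not_isCoprime {F g : K[X]} (hF : F ≠ 0) (hFg : ¬IsCoprime F g) :
    ∃ w : K[X], w ≠ 0 ∧ w.natDegree < F.natDegree ∧ F ∣ w * g := by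
  classical
  have hdF := EuclideanDomain.gcd_dvd_left F g
  have hdg := EuclideanDomain.gcd_dvd_right F g
  have hd : ¬IsUnit (EuclideanDomain.gcd F g) := mt EuclideanDomain.gcd_isUnit_iff.1 hFg
  generalize EuclideanDomain.gcd F g = d at hdF hdg hd
  obtain ⟨w, rfl⟩ := hdF
  obtain ⟨g', rfl⟩ := hdg
  have hd0 := left_ne_zero_of_mul hF
  have hw0 := right_ne_zero_of_mul hF
  have hd_deg := natDegree_pos_iff_degree_pos.2 (degree_pos_of_ne_zero_of_nonunit hd0 hd)
  refine ⟨w, hw0, ?_, g', by ring⟩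
  rw [natDegree_mul hd0 hw0]
  omega

theorem isCoprime_X_pow_sub_one_X {n : ℕ} (hn : 0 < n) : IsCoprime (X ^ n - 1 : K[X]) X :=
  ⟨-1, X ^ (n - 1), by rw [← pow_succ, Nat.sub_add_cancel hn]; ring⟩

theorem isCoprime_X_pow_sub_one_X_pow_mul_sub_C_iff {n i j : ℕ} (hn : 0 < n) (hij : n ∣ i + j)
    (g : K[X]) (c : K) :
    IsCoprime (X ^ n - 1 : K[X]) (X ^ i * g - C c) ↔
      IsCoprime (X ^ n - 1 : K[X]) (g - C c * X ^ j) := by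
  have hdvd : (X ^ n - 1 : K[X]) ∣ X ^ j * (X ^ i * g - C c) - (g - C c * X ^ j) := by
    obtain ⟨k, hk⟩ := hij
    rw [show X ^ j * (X ^ i * g - C c) - (g - C c * X ^ j) = (X ^ (i + j) - 1 : K[X]) * g by ring,
      hk]
    exact (pow_one_sub_dvd_pow_mul_sub_one X n k).mul_right g
  rw [← isCoprime_iff_of_dvd_sub hdvd, IsCoprime.mul_right_iff,
    and_iff_right ((isCoprime_X_pow_sub_one_X hn).pow_right)]

end Polynomial

section CyclicVector

variable {K V : Type*} [Field K] [AddCommGroup V] [Module K V] {φ : Module.End K V} {n : ℕ}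

theorem aeval_apply_ne_zero_of_linearIndependent {β : V}
    (hli : LinearIndependent K fun i : Fin n => (φ ^ (i : ℕ)) β) {w : K[X]} (hw : w ≠ 0)
    (hdeg : w.natDegree < n) : aeval φ w β ≠ 0 := by
  intro h0
  have hsum : ∑ i : Fin n, w.coeff i • (φ ^ (i : ℕ)) β = 0 := by
    rw [← h0, aeval_eq_sum_range' hdeg, ← Fin.sum_univ_eq_sum_range (fun i => w.coeff i • φ ^ i),
      LinearMap.sum_apply]
    rfl
  have hcoeff := Fintype.linearIndependent_iff.1 hli _ hsum
  refine hw (ext fun i => ?_)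
  rcases lt_or_ge i n with hi | hi
  · exact hcoeff ⟨i, hi⟩
  · exact coeff_eq_zero_of_natDegree_lt (hdeg.trans_le hi)

theorem aeval_apply_mem_span_pow_apply (hn : 0 < n) (hφ : φ ^ n = 1) (w : K[X]) (β : V) :
    aeval φ w β ∈ span K (Set.range fun i : Fin n => (φ ^ (i : ℕ)) β) := by
  rw [aeval_endomorphism]
  refine sum_mem fun k _ => smul_mem _ _ ?_
  rw [← Nat.div_add_mod k n, pow_add, pow_mul, hφ, one_pow, one_mul]
  exact subset_span ⟨⟨k % n, Nat.mod_lt _ hn⟩, rfl⟩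

theorem linearIndependent_pow_apply_aeval_iff_isCoprime (hn : 0 < n) (hφ : φ ^ n = 1)
    (hV : finrank K V = n) {α : V} (hα : span K (Set.range fun i : Fin n => (φ ^ (i : ℕ)) α) = ⊤)
    (h : K[X]) :
    LinearIndependent K (fun i : Fin n => (φ ^ (i : ℕ)) (aeval φ h α)) ↔
      IsCoprime (X ^ n - 1 : K[X]) h := by
  have hφ' : aeval φ (X ^ n - 1 : K[X]) = 0 := by simp [hφ]
  constructor
  · intro hli
    by_contra hcop
    have hF : (X ^ n - 1 : K[X]) ≠ 0 := by simpa using X_pow_sub_C_ne_zero hn (1 : K)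
    obtain ⟨w, hw, hdeg, k, hk⟩ := exists_dvd_mul_of_not_isCoprime hF hcop
    refine aeval_apply_ne_zero_of_linearIndependent hli hw
      (by rwa [← C_1, natDegree_X_pow_sub_C] at hdeg) ?_
    rw [← Module.End.mul_apply, ← map_mul, hk, map_mul, hφ', zero_mul, LinearMap.zero_apply]
  · rintro ⟨u, v, huv⟩
    have hv : aeval φ v (aeval φ h α) = α := by
      rw [← Module.End.mul_apply, ← map_mul,
        show v * h = 1 - u * (X ^ n - 1) by linear_combination huv]
      simp [hφ']
    have hspan : ⊤ ≤ span K (Set.range fun i : Fin n => (φ ^ (i : ℕ)) (aeval φ h α)) := by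
      refine hα.symm.le.trans (span_le.2 (Set.range_subset_iff.2 fun i => ?_))
      have hi : (φ ^ (i : ℕ)) α = aeval φ (X ^ (i : ℕ) * v) (aeval φ h α) := by
        rw [map_mul, Module.End.mul_apply, hv, aeval_X_pow]
      rw [hi]
      exact aeval_apply_mem_span_pow_apply hn hφ _ _
    exact linearIndependent_of_top_le_span_of_card_eq_finrank hspan (by simp [hV])

end CyclicVector

namespace FiniteField

variable {K L : Type*} [Field K] [Fintype K] [Field L] [Algebra K L]

theorem frobeniusAlgHom_toLinearMap_pow_apply (i : ℕ) (x : L) :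
    ((frobeniusAlgHom K L).toLinearMap ^ i) x = x ^ Fintype.card K ^ i := by
  rw [Module.End.pow_apply]
  exact congrFun (pow_iterate _ i) x

theorem frobeniusAlgHom_toLinearMap_pow_finrank [Finite L] :
    (frobeniusAlgHom K L).toLinearMap ^ finrank K L = 1 := by
  have := congrArg AlgHom.toEnd (pow_orderOf_eq_one (frobeniusAlgHom K L))
  rwa [map_pow, map_one, orderOf_frobeniusAlgHom] at this

theorem circ_eq_aeval (f : K[X]) (x : L) :
    circ (Fintype.card K) f x = aeval (frobeniusAlgHom K L).toLinearMap f x := by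
  rw [aeval_endomorphism, circ]
  exact Finset.sum_congr rfl fun i _ => by simp only [frobeniusAlgHom_toLinearMap_pow_apply, Algebra.smul_def]

end FiniteField

section Normal

variable {K L : Type*} [Field K] [Field L] [Algebra K L] {q n : ℕ} {α : L}

theorem IsNormal.finiteDimensional (hα : IsNormal K q n α) : FiniteDimensional K L :=
  Module.Finite.of_basis (Basis.mk hα.1 hα.2.ge)

theorem IsNormal.finrank_eq (hα : IsNormal K q n α) : finrank K L = n := by
  simpa using finrank_eq_card_basis (Basis.mk hα.1 hα.2.ge)

theorem IsNormal.pos (hα : IsNormal K q n α) : 0 < n := by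
  have := hα.finiteDimensional
  exact hα.finrank_eq ▸ finrank_pos

theorem isNormal_iff_linearIndependent [FiniteDimensional K L] (hL : finrank K L = n) (β : L) :
    IsNormal K q n β ↔ LinearIndependent K fun i : Fin n => β ^ q ^ (i : ℕ) :=
  ⟨And.left, fun h => ⟨h, h.span_eq_top_of_card_eq_finrank' (by simp [hL])⟩⟩

variable [Fintype K]

theorem isNormal_circ_iff_isCoprime (hα : IsNormal K (Fintype.card K) n α) (h : K[X]) :
    IsNormal K (Fintype.card K) n (circ (Fintype.card K) h α) ↔
      IsCoprime (X ^ n - 1 : K[X]) h := by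
  have := hα.finiteDimensional
  have := Module.finite_of_finite K (M := L)
  have hL := hα.finrank_eq
  rw [isNormal_iff_linearIndependent hL, circ_eq_aeval]
  simp_rw [← frobeniusAlgHom_toLinearMap_pow_apply]
  refine linearIndependent_pow_apply_aeval_iff_isCoprime hα.pos
    (hL ▸ frobeniusAlgHom_toLinearMap_pow_finrank) hL ?_ h
  simpa only [frobeniusAlgHom_toLinearMap_pow_apply] using hα.2

end Normal

theorem circ_X_pow_mul_sub_C {K L : Type*} [Field K] [Fintype K] [Field L] [Algebra K L]
    (g : K[X]) (x : L) (i : ℕ) (c : K) :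
    circ (Fintype.card K) (X ^ i * g - C c) x =
      circ (Fintype.card K) g x ^ Fintype.card K ^ i - c • x := by
  simp only [circ_eq_aeval, map_sub, map_mul, aeval_X_pow, aeval_C, LinearMap.sub_apply,
    Module.End.mul_apply, Module.algebraMap_end_apply, frobeniusAlgHom_toLinearMap_pow_apply]

theorem Nat.exists_lt_dvd_add {n j : ℕ} (hj : j < n) : ∃ i < n, n ∣ i + j := by
  rcases j.eq_zero_or_pos with rfl | hj0
  · exact ⟨0, hj, by simp⟩
  · exact ⟨n - j, by omega, by rw [Nat.sub_add_cancel hj.le]⟩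

theorem stmt15_general (q n b : ℕ) [Field Fq] [Fintype Fq] [Field Fqn] [Algebra Fq Fqn]
    (hcard : Fintype.card Fq = q)
    (α : Fqn) (hα : IsNormal Fq q n α) (g : Fq[X]) :
    (∀ i : ℕ, i < n → ∀ c : ℕ, c < b → IsNormal Fq q n ((circ q g α) ^ q ^ i - c • α)) ↔
      (∀ j : ℕ, j < n → ∀ c : ℕ, c < b →
        IsCoprime ((X : Fq[X]) ^ n - 1) (g - C ((c : ℕ) : Fq) * X ^ j)) := by
  subst hcard
  have hn := hα.pos
  simp_rw [← Nat.cast_smul_eq_nsmul Fq, ← circ_X_pow_mul_sub_C, isNormal_circ_iff_isCoprime hα]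
  constructor
  · intro H j hj c hc
    obtain ⟨i, hi, hij⟩ := Nat.exists_lt_dvd_add hj
    exact (isCoprime_X_pow_sub_one_X_pow_mul_sub_C_iff hn hij g c).1 (H i hi c hc)
  · intro H i hi c hc
    obtain ⟨j, hj, hji⟩ := Nat.exists_lt_dvd_add hi
    rw [add_comm] at hji
    exact (isCoprime_X_pow_sub_one_X_pow_mul_sub_C_iff hn hji g c).2 (H j hj c hc)

theorem stmt15 (p m q n b : ℕ) [Field Fq] [Fintype Fq] [Field Fqn] [Algebra Fq Fqn]
    (hp : p.Prime) (hm : 0 < m) (hpq : q = p ^ m) (hcard : Fintype.card Fq = q)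
    (hn : 0 < n) (hrank : Module.finrank Fq Fqn = n) (hb : b ≤ p)
    (r : ℕ) (f : Fin r → Fq[X]) (hirr : ∀ i, Irreducible (f i))
    (hmonic : ∀ i, (f i).Monic) (hinj : Function.Injective f)
    (hfact : (X : Fq[X]) ^ n - 1 = ∏ i, f i ^ p ^ padicValNat p n)
    (α : Fqn) (hα : IsNormal Fq q n α) (g : Fq[X]) :
    (∀ i : ℕ, i < n → ∀ c : ℕ, c < b → IsNormal Fq q n ((circ q g α) ^ q ^ i - c • α)) ↔
      (∀ j : ℕ, j < n → ∀ c : ℕ, c < b →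
        IsCoprime ((X : Fq[X]) ^ n - 1) (g - C ((c : ℕ) : Fq) * X ^ j)) :=
  stmt15_general q n b hcard α hα g
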